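/- Framed sound commutativity: if m soundly abstracts f in A with A capturing f, n soundly abstracts g in A with A capturing g, and m and n commute under Q in A, then for any abstraction B, the programs f and g commute under P⁺ w.r.t. the equivalence [purv(A * B), ∼_{A*B}] induced by A * B, where P(h) ≡ h ∈ purv(A * B) ∧ Q(fst(π_{A*B}(h))). -/
import Mathlib


namespace HC

open Classical

universe u v w

/-- A heap: a finite partial map from addresses `L` to values `V`. -/
structure Heap (L : Type u) (V : Type v) where
  toFun : L → Option V
  fin : {l | toFun l ≠ none}.Finite

variable {L : Type u} {V : Type v}

/-- Domain of a heap. -/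
def Heap.dom (h : Heap L V) : Set L := {l | h.toFun l ≠ none}

/-- Disjointness of heaps. -/
def HDisj (h₁ h₂ : Heap L V) : Prop := Disjoint h₁.dom h₂.dom

/-- Union of heaps (left-biased; used on disjoint heaps). -/
def hunion (h₁ h₂ : Heap L V) : Heap L V where
  toFun l := (h₁.toFun l).elim (h₂.toFun l) some
  fin := by
    apply (h₁.fin.union h₂.fin).subset
    intro l hl
    simp only [Set.mem_setOf_eq] at hl
    rcases hh : h₁.toFun l with _ | v
    · right; simpa [Heap.dom, hh, Option.elim] using hl
    · left; simp [Heap.dom, hh]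

/-- `subheap h₁ h₂`: `h₁` is a subheap of `h₂`. -/
def subheap (h₁ h₂ : Heap L V) : Prop := ∃ k, HDisj h₁ k ∧ hunion h₁ k = h₂

/-- `hsub k h'` : the subheap of `k` with domain `dom k \ dom h'`. -/
def hsub (k h' : Heap L V) : Heap L V where
  toFun l := (h'.toFun l).elim (k.toFun l) (fun _ => none)
  fin := by
    apply k.fin.subset
    intro l hl
    simp only [Set.mem_setOf_eq] at hl ⊢
    rcases hh : h'.toFun l with _ | v
    · simpa [hh, Option.elim] using hl
    · simp [hh, Option.elim] at hl

/-- Extension `Ψ⁺` of a heap predicate: some subheap satisfies `Ψ`. -/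
def extPred (Ψ : Heap L V → Prop) (h : Heap L V) : Prop := ∃ h', subheap h' h ∧ Ψ h'

/-! ### Concrete programs -/

/-- Sufficient heaps of a program. -/
def suff (f : Heap L V → Set (Heap L V)) : Set (Heap L V) := {h | f h ≠ ∅}

/-- Footprint of a program. -/
def foot (f : Heap L V → Set (Heap L V)) : Set (Heap L V) :=
  suff f ∪ {h | ∀ h', HDisj h h' → hunion h h' ∉ suff f}

/-- Local action: a concrete program is a total function `f : H → 𝒫(H)` acting locally. -/
def LocalAction (f : Heap L V → Set (Heap L V)) : Prop :=
  ∀ h, f h ≠ ∅ → ∀ h', HDisj h h' →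
    f (hunion h h') ≠ ∅ ∧ ∀ k ∈ f (hunion h h'), subheap h' k

/-- The concrete transformer `f̄`. -/
noncomputable def tbar (f : Heap L V → Set (Heap L V)) (C : Set (Heap L V)) :
    Set (Heap L V) :=
  if C ⊆ suff f then ⋃ h ∈ C, f h else ∅

/-- Sequencing `f;g ≜ ḡ ∘ f`. -/
noncomputable def pseq (f g : Heap L V → Set (Heap L V)) : Heap L V → Set (Heap L V) :=
  fun h => tbar g (f h)

/-! ### Abstractions and the abstract domain -/

/-- An abstraction is given by its projection `π : H → X + {✗}`, encoded with `Option`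
(`none` is `✗`). -/
def Locality (π : Heap L V → Option X) : Prop :=
  ∀ h h', HDisj h h' → (π h).isSome → π (hunion h h') = π h

/-- The purview of an abstraction. -/
def purv (π : Heap L V → Option X) : Set (Heap L V) := {h | (π h).isSome}

/-- The abstract domain `𝒜 = X + {⊥, ✗, ✓, ⊤}`. -/
inductive AbsDom (X : Type w) where
  | bot | cross | check | top
  | val (x : X)

/-- The partial order on the abstract domain. -/
def ale {X : Type w} : AbsDom X → AbsDom X → Prop
  | .bot, _ => True
  | _, .top => True
  | .cross, .cross => True
  | .check, .check => True
  | .val _, .check => True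
  | .val x, .val y => x = y
  | _, _ => False

/-- The projection of a single heap, viewed in the abstract domain. -/
def liftProj (π : Heap L V → Option X) (h : Heap L V) : AbsDom X :=
  (π h).elim .cross .val

/-- Abstraction function `α(C) = ⨆_{h ∈ C} π(h)` (the join computed explicitly). -/
noncomputable def alpha (π : Heap L V → Option X) (C : Set (Heap L V)) : AbsDom X :=
  if C = ∅ then .bot
  else if hx : ∃ x, ∀ h ∈ C, π h = some x then .val hx.choose
  else if ∀ h ∈ C, (π h).isSome then .check
  else if ∀ h ∈ C, π h = none then .cross
  else .top

/-- Concretization function `γ(x) = {h | π(h) ≤ x}`. -/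
def gamma (π : Heap L V → Option X) (x : AbsDom X) : Set (Heap L V) :=
  {h | ale (liftProj π h) x}

/-! ### Observational equivalence and concrete commutativity -/

/-- `[Ψ, ∼]` is an observational equivalence: `∼` is an equivalence relation on `H(Ψ⁺)`. -/
def IsObsEq (Ψ : Heap L V → Prop) (sim : Heap L V → Heap L V → Prop) : Prop :=
  (∀ h, extPred Ψ h → sim h h) ∧
  (∀ h h', extPred Ψ h → extPred Ψ h' → sim h h' → sim h' h) ∧
  (∀ a b c, extPred Ψ a → extPred Ψ b → extPred Ψ c → sim a b → sim b c → sim a c)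

/-- Concrete commutativity of `f` and `g` under precondition `P` w.r.t. `[Ψ, ∼]`. -/
def CommuteUnder (Ψ : Heap L V → Prop) (sim : Heap L V → Heap L V → Prop)
    (f g : Heap L V → Set (Heap L V)) (P : Heap L V → Prop) : Prop :=
  ∀ h, P h → pseq f g h ≠ ∅ ∧ pseq g f h ≠ ∅ ∧
    ∃ h', extPred Ψ h' ∧
      ∀ k, (k ∈ pseq f g h ∨ k ∈ pseq g f h) → extPred Ψ k ∧ sim k h'

/-- The equivalence relation `∼_A` induced by an abstraction. -/
def simInd (π : Heap L V → Option X) (h h' : Heap L V) : Prop := π h = π h'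

/-- The heap predicate "h is in purview", used in the induced observational equivalence. -/
def purvPred (π : Heap L V → Option X) (h : Heap L V) : Prop := (π h).isSome

/-- An abstraction captures an observational equivalence. -/
def CapturesEq (π : Heap L V → Option X) (Ψ : Heap L V → Prop)
    (sim : Heap L V → Heap L V → Prop) : Prop :=
  (∀ h, extPred Ψ h → (π h).isSome) ∧
  (∀ h h', Ψ h → Ψ h' → (π h).isSome → π h = π h' → sim h h')

/-! ### Abstract programs and soundness -/

/-- The abstract transformer `m̂` of an abstract program `m : X → 𝒜`. -/
def mhat {X : Type w} (m : X → AbsDom X) : AbsDom X → AbsDom X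
  | .bot => .bot
  | .val x => m x
  | _ => .top

/-- `m` soundly abstracts `f` in the abstraction with projection `π`. -/
def Sound (π : Heap L V → Option X) (m : X → AbsDom X)
    (f : Heap L V → Set (Heap L V)) : Prop :=
  (∀ (C : Set (Heap L V)) (x : AbsDom X),
      ale (alpha π C) x → ale (alpha π (tbar f C)) (mhat m x)) ∧
  (∀ C : Set (Heap L V), (∃ x, alpha π C = .val x) → alpha π (tbar f C) = .bot →
      mhat m (alpha π C) = .bot)

/-- Abstract programs `m` and `n` commute under `Q`. -/
def AbsCommute {X : Type w} (m n : X → AbsDom X) (Q : X → Prop) : Prop :=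
  ∀ x, Q x → mhat n (m x) = mhat m (n x) ∧ ∃ y, mhat n (m x) = .val y

/-- An abstraction captures a concrete program. -/
def CapturesProg (π : Heap L V → Option X) (f : Heap L V → Set (Heap L V)) : Prop :=
  (purv π ⊆ foot f) ∧
  (∀ h ∈ purv π ∩ suff f, ∃ x, alpha π (f h) = .val x) ∧
  (∀ h ∈ purv π ∩ foot f, ∀ h', HDisj h h' →
      alpha π ((fun k => hsub k h') '' f (hunion h h')) = alpha π (f h))

/-! ### Conjunction of abstractions and of abstract programs -/

/-- Projection of the conjunction `A * B`. -/
noncomputable def conjProj (πA : Heap L V → Option X) (πB : Heap L V → Option Y) :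
    Heap L V → Option (X × Y) := fun h =>
  if hc : ∃ p : Heap L V × Heap L V,
      HDisj p.1 p.2 ∧ hunion p.1 p.2 = h ∧ (πA p.1).isSome ∧ (πB p.2).isSome
    then some ((πA hc.choose.1).get hc.choose_spec.2.2.1,
               (πB hc.choose.2).get hc.choose_spec.2.2.2)
    else none

/-- Forget the specific abstract value (used for the join in a compound domain). -/
def toFour {X : Type w} {Z : Type*} : AbsDom X → AbsDom Z
  | .bot => .bot
  | .cross => .cross
  | .top => .top
  | _ => .check

/-- Join in the abstract domain (on the elements arising in program conjunction). -/
def djoin {Z : Type*} : AbsDom Z → AbsDom Z → AbsDom Z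
  | .bot, b => b
  | a, .bot => a
  | .cross, .cross => .cross
  | .check, .check => .check
  | .check, .val _ => .check
  | .val _, .check => .check
  | .val x, .val _ => .val x
  | _, _ => .top

/-- Conjunction `m * n` of abstract programs. -/
def conjProg {X Y : Type*} (m : X → AbsDom X) (n : Y → AbsDom Y) :
    X × Y → AbsDom (X × Y) := fun p =>
  match m p.1, n p.2 with
  | .bot, _ => .bot
  | _, .bot => .bot
  | .val a, .val b => .val (a, b)
  | ma, nb => djoin (toFour ma) (toFour nb)

/-! ### Isomorphism of abstractions -/

/-- `φ` induces an isomorphism between the abstractions with projections `πA`, `πB`. -/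
def Iso (πA : Heap L V → Option X) (πB : Heap L V → Option Y) (φ : X ≃ Y) : Prop :=
  ∀ h, (πA h).map φ = πB h

/-- Extension of `φ : X → Y` to the abstract domains, fixing `⊥, ✗, ✓, ⊤`. -/
def mapAbs {X Y : Type*} (φ : X → Y) : AbsDom X → AbsDom Y
  | .bot => .bot
  | .cross => .cross
  | .check => .check
  | .top => .top
  | .val x => .val (φ x)

end HC

open HC


section Aux

open HC

variable {L V X Y : Type}

theorem Heap.hext {h₁ h₂ : Heap L V} (h : h₁.toFun = h₂.toFun) : h₁ = h₂ := by
  cases h₁; cases h₂; simpa using h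

theorem hdisj_none_right {a b : Heap L V} (hd : HDisj a b) {l : L}
    (h : a.toFun l ≠ none) : b.toFun l = none := by
  by_contra hb
  exact Set.disjoint_left.mp hd h hb

theorem hdisj_symm {a b : Heap L V} (hd : HDisj a b) : HDisj b a := Disjoint.symm hd

theorem hunion_comm {a b : Heap L V} (hd : HDisj a b) : hunion a b = hunion b a := by
  apply Heap.hext; funext l
  show (a.toFun l).elim (b.toFun l) some = (b.toFun l).elim (a.toFun l) some
  rcases ha : a.toFun l with _ | v
  · rcases hb : b.toFun l with _ | w <;> simp
  · have hb : b.toFun l = none := hdisj_none_right hd (by simp [ha])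
    simp [hb]

theorem hunion_assoc (a b c : Heap L V) :
    hunion (hunion a b) c = hunion a (hunion b c) := by
  apply Heap.hext; funext l
  show ((a.toFun l).elim (b.toFun l) some).elim (c.toFun l) some
      = (a.toFun l).elim ((b.toFun l).elim (c.toFun l) some) some
  rcases ha : a.toFun l with _ | v <;> simp

theorem dom_hunion (a b : Heap L V) : (hunion a b).dom = a.dom ∪ b.dom := by
  ext l
  show ¬((a.toFun l).elim (b.toFun l) some = none) ↔ _
  rcases ha : a.toFun l with _ | v <;> simp [Heap.dom, ha]

theorem hdisj_hunion_right {a b c : Heap L V} :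
    HDisj a (hunion b c) ↔ HDisj a b ∧ HDisj a c := by
  unfold HDisj; rw [dom_hunion, Set.disjoint_union_right]

theorem hdisj_hunion_left {a b c : Heap L V} :
    HDisj (hunion a b) c ↔ HDisj a c ∧ HDisj b c := by
  unfold HDisj; rw [dom_hunion, Set.disjoint_union_left]

theorem hsub_hunion {a b : Heap L V} (hd : HDisj a b) : hsub (hunion a b) a = b := by
  apply Heap.hext; funext l
  show (a.toFun l).elim ((a.toFun l).elim (b.toFun l) some) (fun _ => none) = b.toFun l
  rcases ha : a.toFun l with _ | v
  · simp
  · have hb : b.toFun l = none := hdisj_none_right hd (by simp [ha])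
    simp [hb]

theorem subheap_refl (h : Heap L V) : subheap h h := by
  refine ⟨⟨fun _ => none, by simp⟩, ?_, ?_⟩
  · show Disjoint h.dom {l | ¬((none : Option V) = none)}
    simp
  · apply Heap.hext; funext l
    show (h.toFun l).elim none some = h.toFun l
    rcases h.toFun l with _ | v <;> simp

theorem alpha_const {π : Heap L V → Option X} {C : Set (Heap L V)} {x : X}
    (hne : C.Nonempty) (hall : ∀ h ∈ C, π h = some x) : alpha π C = .val x := by
  unfold alpha
  rw [if_neg hne.ne_empty]
  have hx : ∃ x, ∀ h ∈ C, π h = some x := ⟨x, hall⟩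
  rw [dif_pos hx]
  obtain ⟨h0, h0C⟩ := hne
  have h2 := hx.choose_spec h0 h0C
  rw [hall h0 h0C] at h2
  injection h2 with h2
  rw [h2]

theorem alpha_eq_val {π : Heap L V → Option X} {C : Set (Heap L V)} {x : X}
    (h : alpha π C = .val x) : C.Nonempty ∧ ∀ k ∈ C, π k = some x := by
  unfold alpha at h
  by_cases h0 : C = ∅
  · rw [if_pos h0] at h; simp at h
  rw [if_neg h0] at h
  by_cases hx : ∃ x, ∀ h ∈ C, π h = some x
  · rw [dif_pos hx] at h
    have hc : hx.choose = x := by injection h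
    exact ⟨Set.nonempty_iff_ne_empty.mpr h0, hc ▸ hx.choose_spec⟩
  · rw [dif_neg hx] at h
    split_ifs at h <;> simp at h

theorem conjProj_some {πA : Heap L V → Option X} {πB : Heap L V → Option Y}
    {h : Heap L V} {p : X × Y} (hc : conjProj πA πB h = some p) :
    ∃ h₁ h₂, HDisj h₁ h₂ ∧ hunion h₁ h₂ = h ∧ πA h₁ = some p.1 ∧ πB h₂ = some p.2 := by
  unfold conjProj at hc
  by_cases hex : ∃ q : Heap L V × Heap L V,
      HDisj q.1 q.2 ∧ hunion q.1 q.2 = h ∧ (πA q.1).isSome ∧ (πB q.2).isSome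
  · rw [dif_pos hex] at hc
    injection hc with hc
    obtain ⟨hd, hu, hs1, hs2⟩ := hex.choose_spec
    have h1 : (πA hex.choose.1).get hs1 = p.1 := congrArg Prod.fst hc
    have h2 : (πB hex.choose.2).get hs2 = p.2 := congrArg Prod.snd hc
    refine ⟨hex.choose.1, hex.choose.2, hd, hu, ?_, ?_⟩
    · rw [← h1, Option.some_get]
    · rw [← h2, Option.some_get]
  · rw [dif_neg hex] at hc
    simp at hc

theorem conjProj_eq {πA : Heap L V → Option X} {πB : Heap L V → Option Y}
    (hA : Locality πA) (hB : Locality πB) {h h₁ h₂ : Heap L V} {x : X} {y : Y}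
    (hd : HDisj h₁ h₂) (hu : hunion h₁ h₂ = h)
    (h1 : πA h₁ = some x) (h2 : πB h₂ = some y) :
    conjProj πA πB h = some (x, y) := by
  have hπA : πA h = some x := by
    rw [← hu, hA h₁ h₂ hd (by simp [h1]), h1]
  have hπB : πB h = some y := by
    rw [← hu, hunion_comm hd, hB h₂ h₁ (hdisj_symm hd) (by simp [h2]), h2]
  have hex : ∃ q : Heap L V × Heap L V,
      HDisj q.1 q.2 ∧ hunion q.1 q.2 = h ∧ (πA q.1).isSome ∧ (πB q.2).isSome :=
    ⟨(h₁, h₂), hd, hu, by simp [h1], by simp [h2]⟩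
  unfold conjProj
  rw [dif_pos hex]
  obtain ⟨hd', hu', hs1, hs2⟩ := hex.choose_spec
  have e1 : πA hex.choose.1 = some x := by
    have hl := hA hex.choose.1 hex.choose.2 hd' hs1
    rw [hu'] at hl
    rw [← hl]; exact hπA
  have e2 : πB hex.choose.2 = some y := by
    have hl := hB hex.choose.2 hex.choose.1 (hdisj_symm hd') hs2
    rw [hunion_comm (hdisj_symm hd'), hu'] at hl
    rw [← hl]; exact hπB
  simp [e1, e2]

theorem mhat_val {m : X → AbsDom X} {z : AbsDom X} {y : X}
    (h : mhat m z = .val y) : ∃ x, z = .val x ∧ m x = .val y := by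
  cases z with
  | bot => exact absurd h (by simp [mhat])
  | cross => exact absurd h (by simp [mhat])
  | check => exact absurd h (by simp [mhat])
  | top => exact absurd h (by simp [mhat])
  | val x => exact ⟨x, rfl, h⟩

theorem ale_le_val {w : AbsDom X} {x : X} (h : ale w (.val x)) :
    w = .bot ∨ w = .val x := by
  cases w with
  | bot => exact Or.inl rfl
  | cross => exact (h : False).elim
  | check => exact (h : False).elim
  | top => exact (h : False).elim
  | val w => exact Or.inr (congrArg AbsDom.val (h : w = x))

theorem step {πA : Heap L V → Option X} {m : X → AbsDom X}
    {f : Heap L V → Set (Heap L V)}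
    (hm : Sound πA m f) {h0 : Heap L V} {a x₁ : X}
    (hπ : πA h0 = some a) (hma : m a = .val x₁) :
    f h0 ≠ ∅ ∧ alpha πA (f h0) = .val x₁ := by
  have hsing : alpha πA {h0} = .val a :=
    alpha_const ⟨h0, rfl⟩ (by rintro k hk; rw [Set.mem_singleton_iff] at hk; rw [hk, hπ])
  have h1 := hm.1 {h0} (.val a) (by rw [hsing]; exact (rfl : a = a))
  have h1' : ale (alpha πA (tbar f {h0})) (.val x₁) := by
    have hmh : mhat m (.val a) = .val x₁ := hma
    rwa [hmh] at h1
  rcases ale_le_val h1' with hb | hv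
  · exfalso
    have h2 := hm.2 {h0} ⟨a, hsing⟩ hb
    rw [hsing] at h2
    have h3 : m a = .bot := h2
    rw [hma] at h3
    simp at h3
  · have hsuf : {h0} ⊆ suff f := by
      intro k hk
      by_contra hns
      have ht : tbar f {h0} = ∅ := by
        unfold tbar; rw [if_neg]; intro hsub; exact hns (hsub hk)
      rw [ht] at hv
      unfold alpha at hv; rw [if_pos rfl] at hv; simp at hv
    have hteq : tbar f {h0} = f h0 := by
      unfold tbar; rw [if_pos hsuf]; simp
    rw [hteq] at hv
    exact ⟨hsuf (Set.mem_singleton h0), hv⟩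

theorem framed_step {πA : Heap L V → Option X} (hA : Locality πA) {m : X → AbsDom X}
    {f : Heap L V → Set (Heap L V)} (hf : LocalAction f)
    (hm : Sound πA m f) (hcf : CapturesProg πA f)
    {h0 : Heap L V} {a x₁ : X} (hπ : πA h0 = some a) (hma : m a = .val x₁)
    {F : Heap L V} (hd : HDisj h0 F) :
    f (hunion h0 F) ≠ ∅ ∧
      ∀ k ∈ f (hunion h0 F), ∃ k', HDisj F k' ∧ hunion F k' = k ∧ πA k' = some x₁ := by
  obtain ⟨hne0, hval⟩ := step hm hπ hma
  obtain ⟨hneF, hsubF⟩ := hf h0 hne0 F hd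
  refine ⟨hneF, fun k hk => ?_⟩
  have hp : h0 ∈ purv πA := by simp [purv, hπ]
  have hfoot : h0 ∈ purv πA ∩ foot f := ⟨hp, hcf.1 hp⟩
  have h3 := hcf.2.2 h0 hfoot F hd
  rw [hval] at h3
  have himg := (alpha_eq_val h3).2
  obtain ⟨rk, hdk, huk⟩ := hsubF k hk
  have hs : hsub k F = rk := by rw [← huk]; exact hsub_hunion hdk
  have hπs : πA (hsub k F) = some x₁ := himg _ (Set.mem_image_of_mem _ hk)
  exact ⟨rk, hdk, huk, by rwa [hs] at hπs⟩

end Aux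

/-- framed sound commutativity. -/
theorem framed_sound_commutativity {L V X Y : Type} [Countable L] [Infinite L]
    (πA : Heap L V → Option X) (πB : Heap L V → Option Y)
    (hA : Locality πA) (hB : Locality πB)
    (f g : Heap L V → Set (Heap L V)) (hf : LocalAction f) (hg : LocalAction g)
    (m n : X → AbsDom X)
    (hm : Sound πA m f) (hcf : CapturesProg πA f)
    (hn : Sound πA n g) (hcg : CapturesProg πA g)
    (Q : X → Prop) (hcomm : AbsCommute m n Q) :
    CommuteUnder (purvPred (conjProj πA πB)) (simInd (conjProj πA πB)) f g
      (extPred (fun h => ∃ a b, conjProj πA πB h = some (a, b) ∧ Q a)) := by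
  intro h hP
  obtain ⟨h₀, hsh, a, b, hconj, hQ⟩ := hP
  obtain ⟨hA1, hB1, hdAB, huAB, hπa, hπb⟩ := conjProj_some hconj
  have hπa' : πA hA1 = some a := hπa
  have hπb' : πB hB1 = some b := hπb
  obtain ⟨r, hdr, hur⟩ := hsh
  rw [← huAB] at hdr hur
  rw [hdisj_hunion_left] at hdr
  obtain ⟨hdAr, hdBr⟩ := hdr
  have hdAF : HDisj hA1 (hunion hB1 r) := hdisj_hunion_right.mpr ⟨hdAB, hdAr⟩
  have hhu : hunion hA1 (hunion hB1 r) = h := by rw [← hunion_assoc]; exact hur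
  have hπF : πB (hunion hB1 r) = some b := by
    rw [hB hB1 r hdBr (by simp [hπb']), hπb']
  obtain ⟨hcomm1, y, hy⟩ := hcomm a hQ
  obtain ⟨x₁, hmax, hnx₁⟩ := mhat_val hy
  have hy' : mhat m (n a) = AbsDom.val y := by rw [← hcomm1]; exact hy
  obtain ⟨x₂, hnax, hmx₂⟩ := mhat_val hy'
  have key : ∀ (f g : Heap L V → Set (Heap L V)), LocalAction f → LocalAction g →
      ∀ (m n : X → AbsDom X), Sound πA m f → CapturesProg πA f →
        Sound πA n g → CapturesProg πA g →
      ∀ x₁, m a = AbsDom.val x₁ → n x₁ = AbsDom.val y →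
      pseq f g h ≠ ∅ ∧ ∀ j ∈ pseq f g h, conjProj πA πB j = some (y, b) := by
    intro f g hf hg m n hm hcf hn hcg x₁ hmax hnx₁
    obtain ⟨hfne, hfdec⟩ := framed_step hA hf hm hcf hπa' hmax hdAF
    rw [hhu] at hfne hfdec
    have hfsuff : f h ⊆ suff g := by
      intro k hk
      obtain ⟨k', hdk, huk, hπk⟩ := hfdec k hk
      have hg1 := (framed_step hA hg hn hcg hπk hnx₁ (hdisj_symm hdk)).1
      rw [hunion_comm (hdisj_symm hdk), huk] at hg1
      exact hg1
    have hpeq : pseq f g h = ⋃ k ∈ f h, g k := by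
      unfold pseq tbar; rw [if_pos hfsuff]
    constructor
    · rw [hpeq]
      obtain ⟨k, hk⟩ := Set.nonempty_iff_ne_empty.mpr hfne
      obtain ⟨j, hj⟩ := Set.nonempty_iff_ne_empty.mpr (hfsuff hk)
      exact Set.nonempty_iff_ne_empty.mp ⟨j, Set.mem_biUnion hk hj⟩
    · intro j hj
      rw [hpeq, Set.mem_iUnion₂] at hj
      obtain ⟨k, hk, hjk⟩ := hj
      obtain ⟨k', hdk, huk, hπk⟩ := hfdec k hk
      obtain ⟨hgne, hgdec⟩ := framed_step hA hg hn hcg hπk hnx₁ (hdisj_symm hdk)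
      rw [hunion_comm (hdisj_symm hdk), huk] at hgdec
      obtain ⟨j', hdj, huj, hπj⟩ := hgdec j hjk
      exact conjProj_eq hA hB (hdisj_symm hdj)
        (by rw [hunion_comm (hdisj_symm hdj)]; exact huj) hπj hπF
  obtain ⟨hfg_ne, hfg_res⟩ := key f g hf hg m n hm hcf hn hcg x₁ hmax hnx₁
  obtain ⟨hgf_ne, hgf_res⟩ := key g f hg hf n m hn hcg hm hcf x₂ hnax hmx₂
  refine ⟨hfg_ne, hgf_ne, ?_⟩
  obtain ⟨j₀, hj₀⟩ := Set.nonempty_iff_ne_empty.mpr hfg_ne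
  refine ⟨j₀, ⟨j₀, subheap_refl j₀, by simp [purvPred, hfg_res j₀ hj₀]⟩, ?_⟩
  rintro k (hk | hk)
  · exact ⟨⟨k, subheap_refl k, by simp [purvPred, hfg_res k hk]⟩,
      by show conjProj πA πB k = conjProj πA πB j₀
         rw [hfg_res k hk, hfg_res j₀ hj₀]⟩
  · exact ⟨⟨k, subheap_refl k, by simp [purvPred, hgf_res k hk]⟩,
      by show conjProj πA πB k = conjProj πA πB j₀
         rw [hgf_res k hk, hfg_res j₀ hj₀]⟩
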